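/- arXiv:2403.01829 — 2 statements merged into one kernel-verified Lean document; each statement's English description precedes it below -/
import Mathlib

section
/- For all signs σ₁, σ₂ ∈ {1,-1} and all measurement-outcome signs ε₁, ε₂ ∈ {1,-1}, the two fusion projectors propagate through the tensor product of X-type local Clifford operators as follows: M_{ε₁}(X ⊗ Z) * M_{ε₂}(Z ⊗ X) * (U_X^{σ₁} ⊗ U_X^{σ₂}) = (U_X^{σ₁} ⊗ U_X^{σ₂}) * M_{ε₁}(-σ₂•(X ⊗ Y)) * M_{ε₂}(-σ₁•(Y ⊗ X)) as 4×4 complex matrices, where ⊗ denotes the Kronecker product. -/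
/-!
Because `X² = 1`, the Clifford operator is `U_X^σ = cos(π/4) (1 + σ i X)` for `σ = ±1`. It commutes
with `X`, and `Y = i X Z` together with `X Z = -Z X` gives `Z U_X^σ = U_X^σ (-σ Y)`. Tensoring,
`V = U_X^{σ₁} ⊗ U_X^{σ₂}` carries `X ⊗ Z` to `-σ₂ X ⊗ Y` and `Z ⊗ X` to `-σ₁ Y ⊗ X`, and since
`M_ε(A)` is affine in `A`, each projector passes through `V` in the same way.
-/

open Matrix Kronecker

/-- Pauli X matrix. -/
noncomputable def PX : Matrix (Fin 2) (Fin 2) ℂ := !![0, 1; 1, 0]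

/-- Pauli Y matrix. -/
noncomputable def PY : Matrix (Fin 2) (Fin 2) ℂ := !![0, -Complex.I; Complex.I, 0]

/-- Pauli Z matrix. -/
noncomputable def PZ : Matrix (Fin 2) (Fin 2) ℂ := !![1, 0; 0, -1]

/-- Measurement projector with outcome sign `ε`: `M_ε(A) = (1 + ε•A)/2`. -/
noncomputable def Mproj {n : Type*} [Fintype n] [DecidableEq n] (ε : ℂ)
    (A : Matrix n n ℂ) : Matrix n n ℂ :=
  (2 : ℂ)⁻¹ • (1 + ε • A)

/-- Local Clifford operator `U_P^σ = exp(σ•(π/4)•(i•P))`. -/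
noncomputable def U (σ : ℂ) (P : Matrix (Fin 2) (Fin 2) ℂ) : Matrix (Fin 2) (Fin 2) ℂ :=
  NormedSpace.exp (σ • ((Real.pi / 4 : ℂ) • (Complex.I • P)))

open Complex

lemma exp_smul_PX (c : ℂ) :
    NormedSpace.exp (c • PX) = cosh c • (1 : Matrix (Fin 2) (Fin 2) ℂ) + sinh c • PX := by
  set H : Matrix (Fin 2) (Fin 2) ℂ := !![1, 1; 1, -1]
  have hH : H * ((2 : ℂ)⁻¹ • H) = 1 := by
    ext i j; fin_cases i <;> fin_cases j <;> norm_num [H]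
  have hHinv := inv_eq_right_inv hH
  have hdiag : c • PX = H * diagonal ![c, -c] * H⁻¹ := by
    rw [hHinv]
    ext i j; fin_cases i <;> fin_cases j <;>
      simp [H, PX, Matrix.mul_apply, Fin.sum_univ_two, vecMul_diagonal] <;> ring
  rw [hdiag, Matrix.exp_conj _ _ ((isUnit_iff_isUnit_det H).2 (isUnit_det_of_right_inverse hH)),
    exp_diagonal, hHinv]
  ext i j; fin_cases i <;> fin_cases j <;>
    simp [H, PX, Matrix.mul_apply, Fin.sum_univ_two, vecMul_diagonal, Pi.exp_def, cosh, sinh,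
      ← Complex.exp_eq_exp_ℂ] <;> ring

lemma U_PX_eq (σ : ℂ) :
    U σ PX = cos (σ * ((Real.pi : ℂ) / 4)) • (1 : Matrix (Fin 2) (Fin 2) ℂ) +
      (sin (σ * ((Real.pi : ℂ) / 4)) * I) • PX := by
  rw [U, smul_smul, smul_smul, exp_smul_PX, cosh_mul_I, sinh_mul_I]

lemma sin_pi_div_four_eq_cos : sin ((Real.pi : ℂ) / 4) = cos ((Real.pi : ℂ) / 4) := by
  have h := congrArg ((↑) : ℝ → ℂ) (Real.sin_pi_div_four.trans Real.cos_pi_div_four.symm)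
  push_cast at h
  exact h

lemma U_PX_eq_smul {σ : ℂ} (hσ : σ = 1 ∨ σ = -1) :
    U σ PX = cos ((Real.pi : ℂ) / 4) • (1 + (σ * I) • PX) := by
  rw [U_PX_eq, smul_add, smul_smul]
  rcases hσ with rfl | rfl <;> simp [sin_pi_div_four_eq_cos, mul_comm]

lemma semiconjBy_U_PX_PX (σ : ℂ) : SemiconjBy (U σ PX) PX PX :=
  (((Commute.refl PX).smul_left I).smul_left _ |>.smul_left σ).exp_left

lemma semiconjBy_one_add_smul_PX {σ : ℂ} (hσ : σ ^ 2 = 1) :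
    SemiconjBy (1 + (σ * I) • PX) (-σ • PY) PZ := by
  rw [SemiconjBy]
  ext i j; fin_cases i <;> fin_cases j <;>
    simp [PX, PY, PZ, Matrix.mul_apply, Fin.sum_univ_two] <;> grind [I_sq]

lemma semiconjBy_U_PX_PZ {σ : ℂ} (hσ : σ = 1 ∨ σ = -1) :
    SemiconjBy (U σ PX) (-σ • PY) PZ := by
  rw [U_PX_eq_smul hσ]
  exact (semiconjBy_one_add_smul_PX (by rcases hσ with rfl | rfl <;> norm_num)).smul_left _

lemma SemiconjBy.kronecker {l m R : Type*} [Fintype l] [Fintype m] [CommSemiring R]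
    {V A B : Matrix l l R} {W C D : Matrix m m R}
    (h₁ : SemiconjBy V A B) (h₂ : SemiconjBy W C D) : SemiconjBy (V ⊗ₖ W) (A ⊗ₖ C) (B ⊗ₖ D) := by
  rw [SemiconjBy, ← mul_kronecker_mul, ← mul_kronecker_mul, h₁.eq, h₂.eq]

lemma SemiconjBy.mproj {n : Type*} [Fintype n] [DecidableEq n] {V A B : Matrix n n ℂ}
    (h : SemiconjBy V A B) (ε : ℂ) : SemiconjBy V (Mproj ε A) (Mproj ε B) :=
  ((SemiconjBy.one_right V).add_right (h.smul_right ε)).smul_right _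

theorem fusion_proj_propagates_through_UX_UX_general (σ₁ σ₂ ε₁ ε₂ : ℂ)
    (hσ₁ : σ₁ = 1 ∨ σ₁ = -1) (hσ₂ : σ₂ = 1 ∨ σ₂ = -1) :
    Mproj ε₁ (PX ⊗ₖ PZ) * Mproj ε₂ (PZ ⊗ₖ PX) * (U σ₁ PX ⊗ₖ U σ₂ PX) =
      (U σ₁ PX ⊗ₖ U σ₂ PX) * Mproj ε₁ (-σ₂ • (PX ⊗ₖ PY)) * Mproj ε₂ (-σ₁ • (PY ⊗ₖ PX)) := by
  have hXZ : SemiconjBy (U σ₁ PX ⊗ₖ U σ₂ PX) (-σ₂ • (PX ⊗ₖ PY)) (PX ⊗ₖ PZ) := by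
    rw [← kronecker_smul]
    exact (semiconjBy_U_PX_PX σ₁).kronecker (semiconjBy_U_PX_PZ hσ₂)
  have hZX : SemiconjBy (U σ₁ PX ⊗ₖ U σ₂ PX) (-σ₁ • (PY ⊗ₖ PX)) (PZ ⊗ₖ PX) := by
    rw [← smul_kronecker]
    exact (semiconjBy_U_PX_PZ hσ₁).kronecker (semiconjBy_U_PX_PX σ₂)
  rw [mul_assoc _ (Mproj ε₁ _)]
  exact ((hXZ.mproj ε₁).mul_right (hZX.mproj ε₂)).eq.symm

theorem fusion_proj_propagates_through_UX_UX (σ₁ σ₂ ε₁ ε₂ : ℂ)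
    (hσ₁ : σ₁ = 1 ∨ σ₁ = -1) (hσ₂ : σ₂ = 1 ∨ σ₂ = -1)
    (hε₁ : ε₁ = 1 ∨ ε₁ = -1) (hε₂ : ε₂ = 1 ∨ ε₂ = -1) :
    Mproj ε₁ (PX ⊗ₖ PZ) * Mproj ε₂ (PZ ⊗ₖ PX) * (U σ₁ PX ⊗ₖ U σ₂ PX) =
      (U σ₁ PX ⊗ₖ U σ₂ PX) * Mproj ε₁ (-σ₂ • (PX ⊗ₖ PY)) * Mproj ε₂ (-σ₁ • (PY ⊗ₖ PX)) :=
  fusion_proj_propagates_through_UX_UX_general σ₁ σ₂ ε₁ ε₂ hσ₁ hσ₂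
end

section
/- For all signs σ₁, σ₂ ∈ {1,-1} and all measurement-outcome signs ε₁, ε₂ ∈ {1,-1}, the two fusion projectors propagate through the mixed tensor product U_Z^{σ₁} ⊗ U_X^{σ₂} as follows: M_{ε₁}(X ⊗ Z) * M_{ε₂}(Z ⊗ X) * (U_Z^{σ₁} ⊗ U_X^{σ₂}) = (U_Z^{σ₁} ⊗ U_X^{σ₂}) * M_{ε₁}(-σ₁•σ₂•(Y ⊗ Y)) * M_{ε₂}(Z ⊗ X) as 4×4 complex matrices, where ⊗ denotes the Kronecker product. -/
open Matrix Kronecker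

/-!
For `P * P = 1` the exponential series of `z • P` splits into its even part `cosh z • 1` and its
odd part `sinh z • P`, so for `P ∈ {X, Z}` and `σ = ±1` the Clifford operator is
`U_P^σ = (1 + σ i P) / √2`. Hence `Z ⊗ X` commutes with `U_Z^{σ₁} ⊗ U_X^{σ₂}`, while a Pauli `Q`
anticommuting with `P` passes through as `Q U_P^σ = U_P^σ (-σ i P Q)`; this turns `X ⊗ Z` into
`-σ₁σ₂ Y ⊗ Y`. A measurement projector is affine in its observable, so it follows along.
-/

open NormedSpace in
theorem exp_smul_eq_cosh_add_sinh {𝔸 : Type*} [Ring 𝔸] [Algebra ℂ 𝔸] [TopologicalSpace 𝔸]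
    [IsTopologicalRing 𝔸] [T2Space 𝔸] [ContinuousSMul ℂ 𝔸] {P : 𝔸} (hP : P * P = 1) (z : ℂ) :
    exp (z • P) = Complex.cosh z • (1 : 𝔸) + Complex.sinh z • P := by
  have hP_even (n : ℕ) : P ^ (2 * n) = 1 := by rw [pow_mul, sq, hP, one_pow]
  rw [exp_eq_tsum ℂ]
  refine HasSum.tsum_eq (HasSum.even_add_odd ?_ ?_)
  · convert (Complex.hasSum_cosh z).smul_const (1 : 𝔸) using 2 with n
    rw [smul_pow, hP_even, smul_smul, div_eq_inv_mul]
  · convert (Complex.hasSum_sinh z).smul_const P using 2 with n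
    rw [smul_pow, pow_succ P, hP_even, one_mul, smul_smul, div_eq_inv_mul]

theorem Complex.cos_pi_div_four : Complex.cos (Real.pi / 4) = ((√2 / 2 : ℝ) : ℂ) := by
  rw [← Real.cos_pi_div_four]; push_cast; rfl

theorem Complex.sin_pi_div_four : Complex.sin (Real.pi / 4) = ((√2 / 2 : ℝ) : ℂ) := by
  rw [← Real.sin_pi_div_four]; push_cast; rfl

theorem U_eq_of_mul_self_eq_one {σ : ℂ} (hσ : σ = 1 ∨ σ = -1) {P : Matrix (Fin 2) (Fin 2) ℂ}
    (hP : P * P = 1) : U σ P = ((√2 / 2 : ℝ) : ℂ) • (1 + (σ * Complex.I) • P) := by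
  have hθ : σ • ((Real.pi / 4 : ℂ) • (Complex.I • P)) =
      (σ * (Real.pi / 4) * Complex.I) • P := by
    rw [smul_smul, smul_smul, mul_assoc]
  rw [U, hθ, exp_smul_eq_cosh_add_sinh hP, Complex.cosh_mul_I, Complex.sinh_mul_I]
  rcases hσ with rfl | rfl <;>
    simp only [one_mul, neg_one_mul, Complex.cos_neg, Complex.sin_neg, Complex.cos_pi_div_four,
      Complex.sin_pi_div_four] <;> module

theorem commute_U_self (σ : ℂ) (P : Matrix (Fin 2) (Fin 2) ℂ) : Commute P (U σ P) :=
  (((Commute.refl P).smul_right _).smul_right _).smul_right _ |>.exp_right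

theorem mul_U_of_anticommute {σ : ℂ} (hσ : σ = 1 ∨ σ = -1) {P Q : Matrix (Fin 2) (Fin 2) ℂ}
    (hP : P * P = 1) (hQP : Q * P = -(P * Q)) :
    Q * U σ P = U σ P * ((-σ * Complex.I) • (P * Q)) := by
  rw [U_eq_of_mul_self_eq_one hσ hP]
  simp only [mul_smul_comm, smul_mul_assoc, mul_add, add_mul, one_mul, mul_one, hQP, ← mul_assoc,
    hP, smul_smul]
  rcases hσ with rfl | rfl <;>
    linear_combination (norm := module) ((√2 / 2 : ℝ) : ℂ) • Complex.I_sq • Q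

theorem Mproj_mul_eq_mul_Mproj {n : Type*} [Fintype n] [DecidableEq n] (ε : ℂ)
    {A B V : Matrix n n ℂ}
    (h : A * V = V * B) : Mproj ε A * V = V * Mproj ε B := by
  simp only [Mproj, smul_mul_assoc, mul_smul_comm, add_mul, mul_add, one_mul, mul_one, h]

theorem PX_mul_self : PX * PX = 1 := by
  ext i j; fin_cases i <;> fin_cases j <;> simp [PX]

theorem PZ_mul_self : PZ * PZ = 1 := by
  ext i j; fin_cases i <;> fin_cases j <;> simp [PZ]

theorem PX_mul_PZ : PX * PZ = -Complex.I • PY := by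
  ext i j; fin_cases i <;> fin_cases j <;> simp [PX, PZ, PY]

theorem PZ_mul_PX : PZ * PX = Complex.I • PY := by
  ext i j; fin_cases i <;> fin_cases j <;> simp [PX, PZ, PY]

theorem fusion_proj_propagates_through_UZ_UX_general (σ₁ σ₂ ε₁ ε₂ : ℂ)
    (hσ₁ : σ₁ = 1 ∨ σ₁ = -1) (hσ₂ : σ₂ = 1 ∨ σ₂ = -1) :
    Mproj ε₁ (PX ⊗ₖ PZ) * Mproj ε₂ (PZ ⊗ₖ PX) * (U σ₁ PZ ⊗ₖ U σ₂ PX) =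
      (U σ₁ PZ ⊗ₖ U σ₂ PX) * Mproj ε₁ ((-σ₁ * σ₂) • (PY ⊗ₖ PY)) * Mproj ε₂ (PZ ⊗ₖ PX) := by
  have hXZ_anticomm : PX * PZ = -(PZ * PX) := by rw [PX_mul_PZ, PZ_mul_PX, neg_smul]
  have hZX : (PZ ⊗ₖ PX) * (U σ₁ PZ ⊗ₖ U σ₂ PX) = (U σ₁ PZ ⊗ₖ U σ₂ PX) * (PZ ⊗ₖ PX) := by
    rw [← mul_kronecker_mul, ← mul_kronecker_mul, (commute_U_self σ₁ PZ).eq,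
      (commute_U_self σ₂ PX).eq]
  have hXZ : (PX ⊗ₖ PZ) * (U σ₁ PZ ⊗ₖ U σ₂ PX) =
      (U σ₁ PZ ⊗ₖ U σ₂ PX) * ((-σ₁ * σ₂) • (PY ⊗ₖ PY)) := by
    rw [← mul_kronecker_mul, mul_U_of_anticommute hσ₁ PZ_mul_self hXZ_anticomm,
      mul_U_of_anticommute hσ₂ PX_mul_self (neg_eq_iff_eq_neg.mp hXZ_anticomm.symm),
      mul_kronecker_mul, PZ_mul_PX, PX_mul_PZ]
    simp only [smul_kronecker, kronecker_smul, smul_smul]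
    congr 2
    linear_combination (-σ₁ * σ₂ * (Complex.I ^ 2 - 1)) * Complex.I_sq
  rw [mul_assoc, Mproj_mul_eq_mul_Mproj ε₂ hZX, ← mul_assoc, Mproj_mul_eq_mul_Mproj ε₁ hXZ, mul_assoc]

theorem fusion_proj_propagates_through_UZ_UX (σ₁ σ₂ ε₁ ε₂ : ℂ)
    (hσ₁ : σ₁ = 1 ∨ σ₁ = -1) (hσ₂ : σ₂ = 1 ∨ σ₂ = -1)
    (hε₁ : ε₁ = 1 ∨ ε₁ = -1) (hε₂ : ε₂ = 1 ∨ ε₂ = -1) :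
    Mproj ε₁ (PX ⊗ₖ PZ) * Mproj ε₂ (PZ ⊗ₖ PX) * (U σ₁ PZ ⊗ₖ U σ₂ PX) =
      (U σ₁ PZ ⊗ₖ U σ₂ PX) * Mproj ε₁ ((-σ₁ * σ₂) • (PY ⊗ₖ PY)) * Mproj ε₂ (PZ ⊗ₖ PX) :=
  fusion_proj_propagates_through_UZ_UX_general σ₁ σ₂ ε₁ ε₂ hσ₁ hσ₂
end
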